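/- arXiv:1707.06630 — 2 statements merged into one kernel-verified Lean document; each statement's English description precedes it below -/
import Mathlib

section
/- Let S, S̃ be symmetric positive matrices (shearing tensors) and ℙ, ℙ̃ symmetric positive fourth-order tensors on Ω. Suppose there exist η > 0 and δ > 1 with ηS ≤ S̃ − S ≤ (δ−1)S and ηℙ ≤ ℙ̃ − ℙ ≤ (δ−1)ℙ (inequalities in the sense of quadratic forms, a.e. in Ω). Let (φ₀,w₀) and (φ,w) be the normalized weak solutions of the reference and inclusion Neumann problems for the Reissner–Mindlin plate with boundary data (Q̄, M̄), and let W₀, W be the corresponding works of the boundary loads. Then (η/δ)∫_D [(h³/12)ξ₀|∇̂φ₀|² + hσ₀|φ₀+∇w₀|²] ≤ W₀ − W ≤ (δ−1)∫_D [(h³/12)ξ₁|∇̂φ₀|² + hσ₁|φ₀+∇w₀|²]. -/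
open MeasureTheory

/-- Energy Lemma, case of a stiffer inclusion.
The plate problems are encoded variationally: `a` is the (symmetric, positive)
energy bilinear form of the reference plate, `aD` is the part of the energy
carried by the inclusion region `D` (so `0 ≤ aD ≤ a`), `b` is the perturbation
of the energy form due to the inclusion (supported in `D`), satisfying the jump
bounds `η·aD ≤ b ≤ (δ-1)·aD` with `η > 0`, `δ > 1`.  `F` is the work functional
of the boundary loads, `u₀` and `u` are the weak solutions of the reference and
perturbed problems, and `W₀ = F u₀`, `W = F u` are the exerted works.
`f` and `g` stand for the densities `|∇̂φ₀|²` and `|φ₀ + ∇w₀|²` of the reference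
solution, whose weighted integrals over `D` bound `aD u₀ u₀` from below and
above by the ellipticity of the tensors `S`, `ℙ`. -/
theorem energy_lemma_stiff_inclusion
    {V : Type*} [NormedAddCommGroup V] [NormedSpace ℝ V]
    {α : Type*} [MeasurableSpace α] (μm : Measure α) (D : Set α)
    (f g : α → ℝ) (h ξ₀ ξ₁ σ₀ σ₁ η δ : ℝ)
    (a aD b : V →ₗ[ℝ] V →ₗ[ℝ] ℝ) (F : V →ₗ[ℝ] ℝ) (u₀ u : V)
    (hf : ∀ x, 0 ≤ f x) (hg : ∀ x, 0 ≤ g x)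
    (hh : 0 < h) (hξ₀ : 0 < ξ₀) (hσ₀ : 0 < σ₀) (hξ₁ : ξ₀ ≤ ξ₁) (hσ₁ : σ₀ ≤ σ₁)
    (ha_symm : ∀ x y, a x y = a y x) (hb_symm : ∀ x y, b x y = b y x)
    (ha_pos : ∀ x, 0 ≤ a x x) (haD_pos : ∀ x, 0 ≤ aD x x)
    (haD_le : ∀ x, aD x x ≤ a x x)
    (hη : 0 < η) (hδ : 1 < δ)
    (hjump_lo : ∀ x, η * aD x x ≤ b x x)
    (hjump_hi : ∀ x, b x x ≤ (δ - 1) * aD x x)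
    (hu₀ : ∀ v, a u₀ v = F v)
    (hu : ∀ v, a u v + b u v = F v)
    (hell_lo : h ^ 3 / 12 * ξ₀ * (∫ x in D, f x ∂μm) + h * σ₀ * (∫ x in D, g x ∂μm)
        ≤ aD u₀ u₀)
    (hell_hi : aD u₀ u₀
        ≤ h ^ 3 / 12 * ξ₁ * (∫ x in D, f x ∂μm) + h * σ₁ * (∫ x in D, g x ∂μm)) :
    η / δ * (h ^ 3 / 12 * ξ₀ * (∫ x in D, f x ∂μm) + h * σ₀ * (∫ x in D, g x ∂μm))
        ≤ F u₀ - F u ∧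
    F u₀ - F u
        ≤ (δ - 1) * (h ^ 3 / 12 * ξ₁ * (∫ x in D, f x ∂μm)
            + h * σ₁ * (∫ x in D, g x ∂μm)) := by

  set e : V := u₀ - u with he
  -- basic identities from the variational equations
  have h00 : a u₀ u₀ = F u₀ := hu₀ u₀
  have h0u : a u₀ u = F u := hu₀ u
  have huu0 : a u u₀ + b u u₀ = F u₀ := hu u₀
  have huu : a u u + b u u = F u := hu u
  have hsym : a u u₀ = F u := (ha_symm u u₀).trans h0u
  -- expansion lemma
  have hexp : ∀ (c : V →ₗ[ℝ] V →ₗ[ℝ] ℝ) (x y : V),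
      c (x - y) (x - y) = c x x - c x y - c y x + c y y := by
    intro c x y
    simp only [map_sub, LinearMap.sub_apply]
    ring
  set Ae : ℝ := a e e with hAe
  set Be : ℝ := b e e with hBe
  set B0 : ℝ := b u₀ u₀ with hB0
  set Bu : ℝ := b u u with hBu
  set X : ℝ := F u₀ - F u with hX
  have hAe_eq : Ae = X - Bu := by
    have := hexp a u₀ u
    rw [← he] at this
    have hsa : a u u = F u - Bu := by linarith
    rw [hAe, this, h00, h0u, hsym, hsa, hX]; ring
  have hBm : b u₀ u = X := by
    have : b u u₀ = X := by rw [hX]; linarith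
    rw [hb_symm u₀ u, this]
  have hBe_eq : Be = B0 - 2 * X + Bu := by
    have := hexp b u₀ u
    rw [← he] at this
    rw [hBe, this, hBm, hb_symm u u₀, hBm, hB0, hBu]; ring
  have hAe_pos : 0 ≤ Ae := ha_pos e
  have hBe_pos : 0 ≤ Be :=
    le_trans (mul_nonneg hη.le (haD_pos e)) (hjump_lo e)
  have hBe_le : Be ≤ (δ - 1) * Ae := by
    refine le_trans (hjump_hi e) ?_
    exact mul_le_mul_of_nonneg_left (haD_le e) (by linarith)
  have hB0_lo : η * aD u₀ u₀ ≤ B0 := hjump_lo u₀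
  have hB0_hi : B0 ≤ (δ - 1) * aD u₀ u₀ := hjump_hi u₀
  -- Cauchy–Schwarz-type inequality via positivity of b on z = (δ-1)•u₀ - δ•e
  have hz : (0:ℝ) ≤ (δ - 1) ^ 2 * B0 - 2 * δ * (δ - 1) * (B0 - X) + δ ^ 2 * Be := by
    set z : V := (δ - 1) • u₀ - δ • e with hzdef
    have hz0 : 0 ≤ b z z :=
      le_trans (mul_nonneg hη.le (haD_pos z)) (hjump_lo z)
    have hb0e : b u₀ e = B0 - X := by
      rw [he, map_sub, hBm, ← hB0]
    have hbe0 : b e u₀ = B0 - X := by rw [hb_symm e u₀, hb0e]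
    have hzz : b z z = (δ - 1) ^ 2 * B0 - 2 * δ * (δ - 1) * (B0 - X) + δ ^ 2 * Be := by
      rw [hzdef]
      simp only [map_sub, _root_.map_smul, LinearMap.sub_apply, LinearMap.smul_apply,
        smul_eq_mul]
      rw [hb0e, hbe0, ← hB0, ← hBe]
      ring
    linarith [hzz ▸ hz0]
  -- the key identity: X = B0 - Ae - Be
  have hkey : X = B0 - Ae - Be := by rw [hAe_eq, hBe_eq]; ring
  have hδ0 : (0:ℝ) < δ := by linarith
  -- integrals are nonnegative
  have hIf : 0 ≤ ∫ x in D, f x ∂μm := integral_nonneg fun x => hf x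
  have hIg : 0 ≤ ∫ x in D, g x ∂μm := integral_nonneg fun x => hg x
  constructor
  · -- lower bound
    have hmain : η * aD u₀ u₀ ≤ δ * X := by
      nlinarith [hz, hBe_le, hAe_pos, hBe_pos, hB0_lo, haD_pos u₀,
        mul_le_mul_of_nonneg_left hBe_le hδ0.le,
        mul_pos hδ0 (by linarith : (0:ℝ) < δ - 1)]
    have hstep : η / δ * (h ^ 3 / 12 * ξ₀ * (∫ x in D, f x ∂μm)
        + h * σ₀ * (∫ x in D, g x ∂μm)) ≤ η / δ * aD u₀ u₀ := by
      apply mul_le_mul_of_nonneg_left hell_lo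
      positivity
    refine hstep.trans ?_
    rw [div_mul_eq_mul_div, div_le_iff₀ hδ0]
    linarith
  · -- upper bound
    have hX_le : X ≤ (δ - 1) * aD u₀ u₀ := by
      rw [hkey]; linarith
    refine hX_le.trans ?_
    exact mul_le_mul_of_nonneg_left hell_hi (by linarith)
end

section
/- With the same setting, if instead there exist η > 0 and 0 < δ < 1 with −(1−δ)S ≤ S̃ − S ≤ −ηS and −(1−δ)ℙ ≤ ℙ̃ − ℙ ≤ −ηℙ a.e. in Ω, then η∫_D [(h³/12)ξ₀|∇̂φ₀|² + hσ₀|φ₀+∇w₀|²] ≤ W − W₀ ≤ ((1−δ)/δ)∫_D [(h³/12)ξ₁|∇̂φ₀|² + hσ₁|φ₀+∇w₀|²]. -/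
open MeasureTheory

lemma bilin_cauchy_schwarz {V : Type*} [AddCommGroup V] [Module ℝ V]
    (B : V →ₗ[ℝ] V →ₗ[ℝ] ℝ) (hs : ∀ x y, B x y = B y x)
    (hpos : ∀ x, 0 ≤ B x x) (x y : V) :
    (B x y) ^ 2 ≤ B x x * B y y := by
  rw [hs x y]
  have hq : ∀ t : ℝ, 0 ≤ B y y * (t * t) + (2 * B y x) * t + B x x := by
    intro t
    have h1 := hpos (x + t • y)
    have hxy := hs x y
    simp only [map_add, _root_.map_smul, LinearMap.add_apply, LinearMap.smul_apply,
      smul_eq_mul] at h1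
    rw [hxy] at h1
    nlinarith [h1]
  have := discrim_le_zero hq
  rw [discrim] at this
  nlinarith [this]

/-- Pure arithmetic core of the soft-inclusion energy lemma. -/
lemma soft_arith {W Q T aee aduu E₀ E₁ η δ : ℝ}
    (hδ0 : 0 < δ) (hδ1 : δ < 1) (hη : 0 < η)
    (hWQT : W = Q + T) (hTδ : δ * aee ≤ T) (haee : 0 ≤ aee)
    (hQlb : η * aduu ≤ Q) (hadu : 0 ≤ aduu)
    (hT2 : T ^ 2 ≤ (1 - δ) * aee * Q)
    (hQub : Q ≤ (1 - δ) * aduu)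
    (hlo : E₀ ≤ aduu) (hhi : aduu ≤ E₁) :
    η * E₀ ≤ W ∧ W ≤ (1 - δ) / δ * E₁ := by
  have hTpos : 0 ≤ T := le_trans (mul_nonneg hδ0.le haee) hTδ
  have hQpos : 0 ≤ Q := le_trans (mul_nonneg hη.le hadu) hQlb
  have hTle : δ * T ≤ (1 - δ) * Q := by
    rcases eq_or_lt_of_le hTpos with hT0 | hT0
    · nlinarith
    · have k1 : (1 - δ) * Q * (δ * aee) ≤ (1 - δ) * Q * T :=
        mul_le_mul_of_nonneg_left hTδ (mul_nonneg (by linarith) hQpos)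
      have k2 : δ * T ^ 2 ≤ δ * ((1 - δ) * aee * Q) :=
        mul_le_mul_of_nonneg_left hT2 hδ0.le
      have h3 : δ * (T * T) ≤ (1 - δ) * T * Q := by nlinarith [k1, k2]
      nlinarith
  constructor
  · nlinarith [mul_le_mul_of_nonneg_left hlo hη.le]
  · rw [div_mul_eq_mul_div, le_div_iff₀ hδ0]
    have h10 : (1 - δ) * aduu ≤ (1 - δ) * E₁ :=
      mul_le_mul_of_nonneg_left hhi (by linarith)
    nlinarith

/-- Energy Lemma, case of a softer inclusion.
Same variational encoding as in the stiff case, but with jump bounds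
`-(1-δ)·aD ≤ b ≤ -η·aD` with `η > 0`, `0 < δ < 1`; the conclusion bounds
`W - W₀` by the inclusion energy of the reference solution. -/
theorem energy_lemma_soft_inclusion
    {V : Type*} [NormedAddCommGroup V] [NormedSpace ℝ V]
    {α : Type*} [MeasurableSpace α] (μm : Measure α) (D : Set α)
    (f g : α → ℝ) (h ξ₀ ξ₁ σ₀ σ₁ η δ : ℝ)
    (a aD b : V →ₗ[ℝ] V →ₗ[ℝ] ℝ) (F : V →ₗ[ℝ] ℝ) (u₀ u : V)
    (hf : ∀ x, 0 ≤ f x) (hg : ∀ x, 0 ≤ g x)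
    (hh : 0 < h) (hξ₀ : 0 < ξ₀) (hσ₀ : 0 < σ₀) (hξ₁ : ξ₀ ≤ ξ₁) (hσ₁ : σ₀ ≤ σ₁)
    (ha_symm : ∀ x y, a x y = a y x) (hb_symm : ∀ x y, b x y = b y x)
    (ha_pos : ∀ x, 0 ≤ a x x) (haD_pos : ∀ x, 0 ≤ aD x x)
    (haD_le : ∀ x, aD x x ≤ a x x)
    (hη : 0 < η) (hδ0 : 0 < δ) (hδ1 : δ < 1)
    (hjump_lo : ∀ x, -(1 - δ) * aD x x ≤ b x x)
    (hjump_hi : ∀ x, b x x ≤ -η * aD x x)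
    (hu₀ : ∀ v, a u₀ v = F v)
    (hu : ∀ v, a u v + b u v = F v)
    (hell_lo : h ^ 3 / 12 * ξ₀ * (∫ x in D, f x ∂μm) + h * σ₀ * (∫ x in D, g x ∂μm)
        ≤ aD u₀ u₀)
    (hell_hi : aD u₀ u₀
        ≤ h ^ 3 / 12 * ξ₁ * (∫ x in D, f x ∂μm) + h * σ₁ * (∫ x in D, g x ∂μm)) :
    η * (h ^ 3 / 12 * ξ₀ * (∫ x in D, f x ∂μm) + h * σ₀ * (∫ x in D, g x ∂μm))
        ≤ F u - F u₀ ∧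
    F u - F u₀
        ≤ (1 - δ) / δ * (h ^ 3 / 12 * ξ₁ * (∫ x in D, f x ∂μm)
            + h * σ₁ * (∫ x in D, g x ∂μm)) := by
  clear hf hg hh hξ₀ hσ₀ hξ₁ hσ₁
  -- a (u - u₀) v = -(b u v) for all v
  have h1 : ∀ v, a (u - u₀) v = -(b u v) := by
    intro v
    have hk : a u v + b u v = a u₀ v := (hu v).trans (hu₀ v).symm
    have h2 : a (u - u₀) v = a u v - a u₀ v := by
      rw [map_sub]; simp [LinearMap.sub_apply]
    linarith [h2, hk]
  -- b u v = b (u - u₀) v + b u₀ v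
  have hbsplit : ∀ v, b u v = b (u - u₀) v + b u₀ v := by
    intro v
    have h3 : u = (u - u₀) + u₀ := by abel
    conv_lhs => rw [h3]
    rw [map_add]; simp [LinearMap.add_apply]
  -- W = Q + T  with Q = -(b u₀ u₀), T = -(b u₀ (u - u₀))
  have hWQT : F u - F u₀ = -(b u₀ u₀) + -(b u₀ (u - u₀)) := by
    have hW : F u - F u₀ = a u₀ (u - u₀) := by
      rw [← hu₀ u, ← hu₀ u₀, ← LinearMap.map_sub (a u₀)]
    have h2 : a u₀ (u - u₀) = -(b u u₀) := by rw [ha_symm u₀ (u - u₀), h1 u₀]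
    have h4 : b u u₀ = b (u - u₀) u₀ + b u₀ u₀ := hbsplit u₀
    have h5 : b (u - u₀) u₀ = b u₀ (u - u₀) := hb_symm (u - u₀) u₀
    rw [hW]; linarith [h2, h4, h5]
  -- T = a e e + b e e
  have hTee : -(b u₀ (u - u₀)) = a (u - u₀) (u - u₀) + b (u - u₀) (u - u₀) := by
    have h6 := h1 (u - u₀)
    rw [hbsplit (u - u₀)] at h6
    linarith [h6]
  have haee : 0 ≤ a (u - u₀) (u - u₀) := ha_pos (u - u₀)
  have hTδ : δ * a (u - u₀) (u - u₀) ≤ -(b u₀ (u - u₀)) := by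
    rw [hTee]
    nlinarith [hjump_lo (u - u₀), haD_le (u - u₀), haD_pos (u - u₀)]
  have hQlb : η * aD u₀ u₀ ≤ -(b u₀ u₀) := by linarith [hjump_hi u₀]
  have hQpos : 0 ≤ -(b u₀ u₀) :=
    le_trans (mul_nonneg hη.le (haD_pos u₀)) hQlb
  -- Cauchy–Schwarz for -b
  have hBsymm : ∀ x y : V, (-b) x y = (-b) y x := by
    intro x y; simp [hb_symm x y]
  have hBpos : ∀ x : V, 0 ≤ (-b) x x := by
    intro x
    simp only [LinearMap.neg_apply]
    nlinarith [hjump_hi x, haD_pos x]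
  have hCS := bilin_cauchy_schwarz (-b) hBsymm hBpos u₀ (u - u₀)
  simp only [LinearMap.neg_apply, neg_neg] at hCS
  have hBee : -(b (u - u₀) (u - u₀)) ≤ (1 - δ) * a (u - u₀) (u - u₀) := by
    nlinarith [hjump_lo (u - u₀), haD_le (u - u₀), haD_pos (u - u₀)]
  have hT2 : (-(b u₀ (u - u₀))) ^ 2
      ≤ (1 - δ) * a (u - u₀) (u - u₀) * (-(b u₀ u₀)) := by
    nlinarith [hCS, mul_le_mul_of_nonneg_left hBee hQpos]
  have hQub : -(b u₀ u₀) ≤ (1 - δ) * aD u₀ u₀ := by linarith [hjump_lo u₀]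
  exact soft_arith hδ0 hδ1 hη hWQT hTδ haee hQlb (haD_pos u₀) hT2 hQub hell_lo hell_hi
end
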